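/- Let E be a normed vector space, let n, p be real numbers with 0 < n < p, set β = 1 − n/p, let M, C ≥ 0, and set C' = ∫₀¹ (1−s)^{−(1+n/p)/2} s^{−β} ds (a finite constant). Let u, v : (0,∞) → E be strongly measurable with ‖u(t)‖ ≤ M t^{−β/2} and ‖v(t)‖ ≤ M t^{−β/2} for all t > 0, and let g : (0,∞) → [0,∞) be a bounded measurable function with lim_{t→∞} g(t) = 0 such that for all t > 0, ‖u(t) − v(t)‖ ≤ t^{−β/2} g(t) + C ∫₀ᵗ (t−τ)^{−(1+n/p)/2} (‖u(τ)‖ + ‖v(τ)‖) ‖u(τ) − v(τ)‖ dτ. If moreover 2MC·C' < 1, then lim_{t→∞} t^{β/2} ‖u(t) − v(t)‖ = 0. -/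

import Mathlib

/-!
Let `f t = t ^ (β / 2) * ‖u t - v t‖`, which is bounded by `2 M`. If `f ≤ c` on `[T, ∞)`, split
the Duhamel integral at `T`: the part over `(0, T)` is `O(t ^ (-(n / p)))` after rescaling, while
on `[T, t)` the bound `f ≤ c` and the scaling `∫₀ᵗ (t - τ) ^ (-a) τ ^ (-β) dτ = t ^ (1 - a - β) C'`,
with `a = (1 + n / p) / 2`, give at most `2 M C C' c`; the powers of `t` cancel because the inequality is scale invariant.
Hence `L = limsup f` satisfies `L ≤ 2 M C C' (L + ε)` for all `ε > 0`, so `L = 0`.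
-/

open MeasureTheory Filter Set Topology

theorem tendsto_nhds_zero_of_eventually_le_add_mul {α : Type*} {l : Filter α} [l.NeBot]
    {f : α → ℝ} {k : ℝ} (hk : k < 1) (hf0 : ∀ᶠ x in l, 0 ≤ f x)
    (hfB : IsBoundedUnder (· ≤ ·) l f)
    (hstep : ∀ c, 0 ≤ c → (∀ᶠ x in l, f x ≤ c) →
      ∃ h : α → ℝ, Tendsto h l (𝓝 0) ∧ ∀ᶠ x in l, f x ≤ h x + k * c) :
    Tendsto f l (𝓝 0) := by
  have hfB' : IsBoundedUnder (· ≥ ·) l f := isBoundedUnder_of_eventually_ge hf0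
  set L := limsup f l
  have hL0 : 0 ≤ L := le_limsup_of_frequently_le hf0.frequently hfB
  have hL : ∀ ε > 0, L ≤ k * (L + ε) := by
    intro ε hε
    obtain ⟨h, hh, hfh⟩ := hstep (L + ε) (by positivity) <|
      (eventually_lt_of_limsup_lt (lt_add_of_pos_right L hε) hfB).mono fun _ => le_of_lt
    have hlim : Tendsto (fun x => h x + k * (L + ε)) l (𝓝 (k * (L + ε))) := by
      simpa using hh.add_const (k * (L + ε))
    calc L ≤ limsup (fun x => h x + k * (L + ε)) l :=
          limsup_le_limsup hfh hfB'.isCoboundedUnder_le hlim.isBoundedUnder_le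
      _ = k * (L + ε) := hlim.limsup_eq
  have hLk : L ≤ k * L := by
    have hcont : Tendsto (fun ε => k * (L + ε)) (𝓝[>] 0) (𝓝 (k * L)) :=
      tendsto_nhdsWithin_of_tendsto_nhds <| by
        simpa using ((continuous_const_add L).tendsto 0).const_mul k
    exact ge_of_tendsto hcont (eventually_nhdsWithin_of_forall hL)
  have hL_nonpos : L ≤ 0 := by nlinarith
  exact tendsto_of_le_liminf_of_limsup_le (le_liminf_of_le hfB.isCoboundedUnder_ge hf0)
    hL_nonpos hfB hfB'

theorem intervalIntegrable_sub_rpow_mul_rpow {a b t : ℝ} (ha : a < 1) (hb : b < 1) (ht : 0 < t) :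
    IntervalIntegrable (fun s => (t - s) ^ (-a) * s ^ (-b)) volume 0 t := by
  have hleft : IntervalIntegrable (fun s => (t - s) ^ (-a) * s ^ (-b)) volume 0 (t / 2) := by
    refine (intervalIntegral.intervalIntegrable_rpow' (by linarith)).continuousOn_mul ?_
    refine (continuousOn_const.sub continuousOn_id).rpow_const fun s hs => Or.inl ?_
    rw [uIcc_of_le (by linarith)] at hs
    exact (sub_pos.2 (show s < t by linarith [hs.2])).ne'
  have hright : IntervalIntegrable (fun s => (t - s) ^ (-a) * s ^ (-b)) volume (t / 2) t := by
    have h := (intervalIntegral.intervalIntegrable_rpow' (a := t / 2) (b := 0) (by linarith :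
      -1 < -a)).comp_sub_left t
    rw [show t - t / 2 = t / 2 by ring, sub_zero] at h
    refine h.mul_continuousOn (continuousOn_id.rpow_const fun s hs => Or.inl ?_)
    rw [uIcc_of_le (by linarith)] at hs
    exact (show 0 < s by linarith [hs.1]).ne'
  exact hleft.trans hright

theorem integrableOn_Ioo_sub_rpow_mul_rpow {a b t : ℝ} (ha : a < 1) (hb : b < 1) (ht : 0 < t) :
    IntegrableOn (fun s => (t - s) ^ (-a) * s ^ (-b)) (Ioo 0 t) :=
  (intervalIntegrable_sub_rpow_mul_rpow ha hb ht).1.mono_set Ioo_subset_Ioc_self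

theorem integral_Ioo_sub_rpow_mul_rpow (a b : ℝ) {t : ℝ} (ht : 0 < t) :
    ∫ τ in Ioo 0 t, (t - τ) ^ (-a) * τ ^ (-b)
      = t ^ (1 - a - b) * ∫ s in Ioo 0 1, (1 - s) ^ (-a) * s ^ (-b) := by
  rw [← integral_Ioc_eq_integral_Ioo, ← intervalIntegral.integral_of_le ht.le,
    ← integral_Ioc_eq_integral_Ioo, ← intervalIntegral.integral_of_le zero_le_one]
  have hsub := intervalIntegral.integral_comp_mul_left (a := 0) (b := 1)
    (fun τ => (t - τ) ^ (-a) * τ ^ (-b)) ht.ne'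
  rw [mul_zero, mul_one, smul_eq_mul] at hsub
  have hfactor : ∫ s in (0:ℝ)..1, (t - t * s) ^ (-a) * (t * s) ^ (-b)
      = t ^ (-a) * t ^ (-b) * ∫ s in (0:ℝ)..1, (1 - s) ^ (-a) * s ^ (-b) := by
    rw [← intervalIntegral.integral_const_mul]
    refine intervalIntegral.integral_congr fun s hs => ?_
    rw [uIcc_of_le zero_le_one] at hs
    simp only [show t - t * s = t * (1 - s) by ring]
    rw [Real.mul_rpow ht.le (by linarith [hs.2]), Real.mul_rpow ht.le hs.1]
    ring
  rw [hfactor, eq_inv_mul_iff_mul_eq₀ ht.ne'] at hsub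
  rw [← hsub, show 1 - a - b = 1 + -a + -b by ring, Real.rpow_add ht, Real.rpow_add ht,
    Real.rpow_one]
  ring

theorem setIntegral_Ioo_sub_rpow_mul_le {a b t T A c : ℝ} {φ : ℝ → ℝ} (ha0 : 0 ≤ a) (ha : a < 1)
    (hb : b < 1) (hT : 0 < T) (hTt : 2 * T ≤ t) (hφ : Measurable φ)
    (hφ0 : ∀ τ, 0 < τ → 0 ≤ φ τ) (hφA : ∀ τ, 0 < τ → φ τ ≤ A * τ ^ (-b)) (hc : 0 ≤ c)
    (hφc : ∀ τ, T ≤ τ → φ τ ≤ c * τ ^ (-b)) :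
    ∫ τ in Ioo 0 t, (t - τ) ^ (-a) * φ τ ≤
      A * 2 ^ a * t ^ (-a) * (∫ τ in Ioo 0 T, τ ^ (-b)) +
        c * t ^ (1 - a - b) * ∫ s in Ioo 0 1, (1 - s) ^ (-a) * s ^ (-b) := by
  have ht : 0 < t := by linarith
  have hW := integrableOn_Ioo_sub_rpow_mul_rpow ha hb ht
  have hK : IntegrableOn (fun τ => τ ^ (-b)) (Ioo 0 t) :=
    (intervalIntegral.intervalIntegrable_rpow' (by linarith)).1.mono_set Ioo_subset_Ioc_self
  have hint : IntegrableOn (fun τ => (t - τ) ^ (-a) * φ τ) (Ioo 0 t) := by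
    refine (hW.const_mul A).mono'
      (((measurable_const.sub measurable_id).pow_const _).mul hφ).aestronglyMeasurable ?_
    refine (ae_restrict_iff' measurableSet_Ioo).2 (Eventually.of_forall fun τ hτ => ?_)
    have hW0 : 0 ≤ (t - τ) ^ (-a) := Real.rpow_nonneg (by linarith [hτ.2]) _
    rw [Real.norm_eq_abs, abs_of_nonneg (mul_nonneg hW0 (hφ0 τ hτ.1))]
    calc (t - τ) ^ (-a) * φ τ ≤ (t - τ) ^ (-a) * (A * τ ^ (-b)) :=
          mul_le_mul_of_nonneg_left (hφA τ hτ.1) hW0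
      _ = A * ((t - τ) ^ (-a) * τ ^ (-b)) := by ring
  -- For `τ < T ≤ t / 2` the kernel is at most `(t / 2) ^ (-a)`; for `τ ≥ T` use the bound by `c`.
  have hkernel : ∀ τ ∈ Ioo 0 t, (t - τ) ^ (-a) * φ τ ≤
      A * 2 ^ a * t ^ (-a) * (Ioo 0 T).indicator (fun τ => τ ^ (-b)) τ +
        c * ((t - τ) ^ (-a) * τ ^ (-b)) := by
    intro τ ⟨hτ0, hτt⟩
    have hW0 : 0 ≤ (t - τ) ^ (-a) := Real.rpow_nonneg (by linarith) _
    by_cases hτT : τ < T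
    · have hfar : (t - τ) ^ (-a) ≤ 2 ^ a * t ^ (-a) := by
        calc (t - τ) ^ (-a) ≤ (t / 2) ^ (-a) :=
              Real.rpow_le_rpow_of_nonpos (by positivity) (by linarith) (by linarith)
          _ = 2 ^ a * t ^ (-a) := by
              rw [Real.div_rpow ht.le zero_le_two, Real.rpow_neg zero_le_two]; field_simp
      rw [indicator_of_mem (show τ ∈ Ioo 0 T from ⟨hτ0, hτT⟩)]
      have hrest : 0 ≤ c * ((t - τ) ^ (-a) * τ ^ (-b)) := by positivity
      linarith [mul_le_mul hfar (hφA τ hτ0) (hφ0 τ hτ0) (by positivity)]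
    · rw [indicator_of_notMem (fun h => hτT h.2), mul_zero, zero_add]
      calc (t - τ) ^ (-a) * φ τ ≤ (t - τ) ^ (-a) * (c * τ ^ (-b)) :=
            mul_le_mul_of_nonneg_left (hφc τ (not_lt.1 hτT)) hW0
        _ = c * ((t - τ) ^ (-a) * τ ^ (-b)) := by ring
  calc ∫ τ in Ioo 0 t, (t - τ) ^ (-a) * φ τ
      ≤ ∫ τ in Ioo 0 t, (A * 2 ^ a * t ^ (-a) * (Ioo 0 T).indicator (fun τ => τ ^ (-b)) τ +
          c * ((t - τ) ^ (-a) * τ ^ (-b))) :=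
        setIntegral_mono_on hint (((hK.indicator measurableSet_Ioo).const_mul _).add
          (hW.const_mul _)) measurableSet_Ioo hkernel
    _ = _ := by
      rw [integral_add ((hK.indicator measurableSet_Ioo).const_mul _) (hW.const_mul _),
        integral_const_mul, integral_const_mul, setIntegral_indicator measurableSet_Ioo,
        inter_eq_right.2 (Ioo_subset_Ioo_right (by linarith)),
        integral_Ioo_sub_rpow_mul_rpow a b ht]
      ring

theorem rpow_mul_le_iff_le_mul_rpow_neg {τ s x c : ℝ} (hτ : 0 < τ) :
    τ ^ s * x ≤ c ↔ x ≤ c * τ ^ (-s) := by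
  rw [Real.rpow_neg hτ.le, ← div_eq_mul_inv, le_div_iff₀ (Real.rpow_pos_of_pos hτ s), mul_comm]

theorem mul_le_mul_rpow_neg_half {x y A B τ b : ℝ} (hτ : 0 < τ) (hy : 0 ≤ y) (hA : 0 ≤ A)
    (hx : x ≤ A * τ ^ (-(b / 2))) (hy' : y ≤ B * τ ^ (-(b / 2))) :
    x * y ≤ A * B * τ ^ (-b) := by
  calc x * y ≤ (A * τ ^ (-(b / 2))) * (B * τ ^ (-(b / 2))) :=
        mul_le_mul hx hy' hy (by positivity)
    _ = A * B * τ ^ (-(b / 2) + -(b / 2)) := by rw [Real.rpow_add hτ]; ring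
    _ = A * B * τ ^ (-b) := by ring_nf

section Duhamel

variable {E : Type*} [NormedAddCommGroup E] {u v : ℝ → E} {M β : ℝ}

theorem norm_add_norm_le_of_le_rpow (hub : ∀ t : ℝ, 0 < t → ‖u t‖ ≤ M * t ^ (-(β / 2)))
    (hvb : ∀ t : ℝ, 0 < t → ‖v t‖ ≤ M * t ^ (-(β / 2))) {t : ℝ} (ht : 0 < t) :
    ‖u t‖ + ‖v t‖ ≤ 2 * M * t ^ (-(β / 2)) := by
  linarith [hub t ht, hvb t ht]

theorem rpow_mul_norm_sub_le_of_le_rpow (hub : ∀ t : ℝ, 0 < t → ‖u t‖ ≤ M * t ^ (-(β / 2)))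
    (hvb : ∀ t : ℝ, 0 < t → ‖v t‖ ≤ M * t ^ (-(β / 2))) {t : ℝ} (ht : 0 < t) :
    t ^ (β / 2) * ‖u t - v t‖ ≤ 2 * M :=
  (rpow_mul_le_iff_le_mul_rpow_neg ht).2
    ((norm_sub_le _ _).trans (norm_add_norm_le_of_le_rpow hub hvb ht))

theorem rpow_mul_norm_sub_le_of_duhamel {a C c T t : ℝ} {g : ℝ → ℝ} (ha0 : 0 ≤ a) (ha : a < 1)
    (hβ : β < 1) (hM : 0 ≤ M) (hC : 0 ≤ C) (hc : 0 ≤ c)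
    (hu : StronglyMeasurable u) (hv : StronglyMeasurable v)
    (hub : ∀ t : ℝ, 0 < t → ‖u t‖ ≤ M * t ^ (-(β / 2)))
    (hvb : ∀ t : ℝ, 0 < t → ‖v t‖ ≤ M * t ^ (-(β / 2)))
    (hT : 0 < T) (hTt : 2 * T ≤ t) (hfc : ∀ τ, T ≤ τ → τ ^ (β / 2) * ‖u τ - v τ‖ ≤ c)
    (hineq : ‖u t - v t‖ ≤ t ^ (-(β / 2)) * g t +
      C * ∫ τ in Ioo 0 t, (t - τ) ^ (-a) * (‖u τ‖ + ‖v τ‖) * ‖u τ - v τ‖) :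
    t ^ (β / 2) * ‖u t - v t‖ ≤ g t +
      4 * M ^ 2 * C * 2 ^ a * (∫ τ in Ioo 0 T, τ ^ (-β)) * t ^ (β / 2 - a) +
        2 * M * C * (∫ s in Ioo 0 1, (1 - s) ^ (-a) * s ^ (-β)) * c * t ^ (1 - a - β / 2) := by
  have ht : 0 < t := by linarith
  have hφA : ∀ τ, 0 < τ → (‖u τ‖ + ‖v τ‖) * ‖u τ - v τ‖ ≤ 2 * M * (2 * M) * τ ^ (-β) :=
    fun τ hτ => mul_le_mul_rpow_neg_half hτ (norm_nonneg _) (by positivity)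
      (norm_add_norm_le_of_le_rpow hub hvb hτ)
      ((norm_sub_le _ _).trans (norm_add_norm_le_of_le_rpow hub hvb hτ))
  have hφc : ∀ τ, T ≤ τ → (‖u τ‖ + ‖v τ‖) * ‖u τ - v τ‖ ≤ 2 * M * c * τ ^ (-β) :=
    fun τ hτ => mul_le_mul_rpow_neg_half (hT.trans_le hτ) (norm_nonneg _) (by positivity)
      (norm_add_norm_le_of_le_rpow hub hvb (hT.trans_le hτ))
      ((rpow_mul_le_iff_le_mul_rpow_neg (hT.trans_le hτ)).1 (hfc τ hτ))
  have hI := setIntegral_Ioo_sub_rpow_mul_le (φ := fun τ => (‖u τ‖ + ‖v τ‖) * ‖u τ - v τ‖)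
    ha0 ha hβ hT hTt ((hu.norm.add hv.norm).mul (hu.sub hv).norm).measurable
    (fun τ _ => by positivity) hφA (by positivity) hφc
  have hcancel : t ^ (β / 2) * t ^ (-(β / 2)) = 1 := by
    rw [← Real.rpow_add ht, add_neg_cancel, Real.rpow_zero]
  have e1 : t ^ (β / 2 - a) = t ^ (β / 2) * t ^ (-a) := by rw [← Real.rpow_add ht]; ring_nf
  have e2 : t ^ (1 - a - β / 2) = t ^ (β / 2) * t ^ (1 - a - β) := by
    rw [← Real.rpow_add ht]; ring_nf
  calc t ^ (β / 2) * ‖u t - v t‖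
      ≤ t ^ (β / 2) * (t ^ (-(β / 2)) * g t +
          C * ∫ τ in Ioo 0 t, (t - τ) ^ (-a) * (‖u τ‖ + ‖v τ‖) * ‖u τ - v τ‖) :=
        mul_le_mul_of_nonneg_left hineq (by positivity)
    _ ≤ t ^ (β / 2) * (t ^ (-(β / 2)) * g t +
          C * (2 * M * (2 * M) * 2 ^ a * t ^ (-a) * (∫ τ in Ioo 0 T, τ ^ (-β)) +
            2 * M * c * t ^ (1 - a - β) * ∫ s in Ioo 0 1, (1 - s) ^ (-a) * s ^ (-β))) := by
        gcongr
        simpa only [mul_assoc] using hI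
    _ = _ := by rw [e1, e2]; linear_combination g t * hcancel

end Duhamel

theorem navier_stokes_asymptotic_stability_general {E : Type*} [NormedAddCommGroup E]
    (n p : ℝ) (hn : 0 < n) (hnp : n < p) (β : ℝ) (hβ : β = 1 - n / p)
    (M C : ℝ) (hM : 0 ≤ M) (hC : 0 ≤ C)
    (C' : ℝ)
    (hC' : C' = ∫ s in Set.Ioo (0:ℝ) 1, (1 - s) ^ (-((1 + n / p) / 2)) * s ^ (-β))
    (u v : ℝ → E) (hu : StronglyMeasurable u) (hv : StronglyMeasurable v)
    (hub : ∀ t : ℝ, 0 < t → ‖u t‖ ≤ M * t ^ (-(β / 2)))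
    (hvb : ∀ t : ℝ, 0 < t → ‖v t‖ ≤ M * t ^ (-(β / 2)))
    (g : ℝ → ℝ)
    (hg_lim : Tendsto g atTop (nhds 0))
    (hineq : ∀ t : ℝ, 0 < t → ‖u t - v t‖ ≤ t ^ (-(β / 2)) * g t +
      C * ∫ τ in Set.Ioo 0 t,
        (t - τ) ^ (-((1 + n / p) / 2)) * (‖u τ‖ + ‖v τ‖) * ‖u τ - v τ‖)
    (hsmall : 2 * M * C * C' < 1) :
    Tendsto (fun t : ℝ => t ^ (β / 2) * ‖u t - v t‖) atTop (nhds 0) := by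
  have hq0 : 0 < n / p := div_pos hn (hn.trans hnp)
  have hq1 : n / p < 1 := (div_lt_one (hn.trans hnp)).mpr hnp
  refine tendsto_nhds_zero_of_eventually_le_add_mul hsmall
    ((eventually_gt_atTop 0).mono fun t ht =>
      mul_nonneg (Real.rpow_nonneg ht.le _) (norm_nonneg _))
    (isBoundedUnder_of_eventually_le ((eventually_gt_atTop 0).mono fun t ht =>
      rpow_mul_norm_sub_le_of_le_rpow hub hvb ht)) fun c hc hfc => ?_
  obtain ⟨T₀, hT₀⟩ := eventually_atTop.1 hfc
  refine ⟨fun t => g t + 4 * M ^ 2 * C * 2 ^ ((1 + n / p) / 2) *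
    (∫ τ in Ioo 0 (max T₀ 1), τ ^ (-β)) * t ^ (-(n / p)),
    by simpa using hg_lim.add ((tendsto_rpow_neg_atTop hq0).const_mul _), ?_⟩
  filter_upwards [eventually_ge_atTop (2 * max T₀ 1)] with t ht
  have h := rpow_mul_norm_sub_le_of_duhamel (by positivity) (by linarith) (by linarith)
    hM hC hc hu hv hub hvb (by positivity) ht (fun τ hτ => hT₀ τ (le_of_max_le_left hτ))
    (hineq t (by linarith [le_max_right T₀ 1]))
  rwa [← hC', show β / 2 - (1 + n / p) / 2 = -(n / p) by rw [hβ]; ring,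
    show 1 - (1 + n / p) / 2 - β / 2 = 0 by rw [hβ]; ring, Real.rpow_zero, mul_one] at h

/-- Corollary 2 of the paper: under the bilinear Duhamel inequality, if the heat
evolution of the difference of the initial data decays (i.e. `g(t) → 0` where
`g(t) = t^{β/2}‖e^{tΔ}(u₀ - v₀)‖`), and `M` is small enough that
`2MC·C' < 1` with `C' = ∫₀¹ (1-s)^{-(1+n/p)/2} s^{-β} ds`, then
`t^{β/2} ‖u(t) - v(t)‖ → 0` as `t → ∞`. -/
theorem navier_stokes_asymptotic_stability {E : Type*} [NormedAddCommGroup E]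
    (n p : ℝ) (hn : 0 < n) (hnp : n < p) (β : ℝ) (hβ : β = 1 - n / p)
    (M C : ℝ) (hM : 0 ≤ M) (hC : 0 ≤ C)
    (C' : ℝ)
    (hC' : C' = ∫ s in Set.Ioo (0:ℝ) 1, (1 - s) ^ (-((1 + n / p) / 2)) * s ^ (-β))
    (u v : ℝ → E) (hu : StronglyMeasurable u) (hv : StronglyMeasurable v)
    (hub : ∀ t : ℝ, 0 < t → ‖u t‖ ≤ M * t ^ (-(β / 2)))
    (hvb : ∀ t : ℝ, 0 < t → ‖v t‖ ≤ M * t ^ (-(β / 2)))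
    (g : ℝ → ℝ) (hg_nonneg : ∀ t : ℝ, 0 < t → 0 ≤ g t)
    (hg_bdd : ∃ B, ∀ t : ℝ, 0 < t → g t ≤ B) (hg_meas : Measurable g)
    (hg_lim : Tendsto g atTop (nhds 0))
    (hineq : ∀ t : ℝ, 0 < t → ‖u t - v t‖ ≤ t ^ (-(β / 2)) * g t +
      C * ∫ τ in Set.Ioo 0 t,
        (t - τ) ^ (-((1 + n / p) / 2)) * (‖u τ‖ + ‖v τ‖) * ‖u τ - v τ‖)
    (hsmall : 2 * M * C * C' < 1) :
    Tendsto (fun t : ℝ => t ^ (β / 2) * ‖u t - v t‖) atTop (nhds 0) :=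
  navier_stokes_asymptotic_stability_general n p hn hnp β hβ M C hM hC C' hC' u v hu hv hub hvb g
    hg_lim hineq hsmall
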